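/- arXiv:chao-dyn/9610019 — 2 statements merged into one kernel-verified Lean document; each statement's English description precedes it below -/
import Mathlib

section
/- Let μ be a finite positive Borel measure on 𝕋, Δ an open interval, 0 ≤ β ≤ 1, and G_n(λ) := ∫ K_{n-1}(λ - x) dμ(x) with K the Fejér kernel. If there is a constant C such that limsup_{n→∞} n^{-β} G_n(λ) ≤ C uniformly in λ ∈ Δ, then μ is uniformly (1-β)-Hölder continuous in Δ, i.e., there is a constant C' such that μ(I) ≤ C'|I|^{1-β} for every interval I ⊂ Δ with |I| < 1. -/
/-!
On an interval of length `ℓ ≤ 1/n` centred at `λ`, Jordan's inequality gives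
`K_{n-1}(λ - x) ≥ 4n/π²`, so `μ(I) ≤ (π²/4n) G_n(λ) ≲ n^{β-1}`. Choosing `n ≈ 1/ℓ` turns this
into `μ(I) ≲ ℓ^{1-β}` for short intervals; long intervals are handled by `μ(I) ≤ μ(𝕋)`.
-/

open MeasureTheory Filter
open scoped Real

open Classical in
/-- The Fejér kernel `K_{n-1}(y) = (1/n) (sin(nπy)/sin(πy))²` on the circle,
with value `n` at integer points (the continuous extension). -/
noncomputable def fejer (n : ℕ) (y : ℝ) : ℝ :=
  if ∃ m : ℤ, y = (m : ℝ) then (n : ℝ)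
  else (1 / (n : ℝ)) * (Real.sin (n * π * y) / Real.sin (π * y)) ^ 2

open Set
open scoped Topology

lemma abs_sin_nat_mul_le (n : ℕ) (t : ℝ) : |Real.sin (n * t)| ≤ n * |Real.sin t| := by
  induction n with
  | zero => simp
  | succ k ih =>
    calc |Real.sin ((k + 1 : ℕ) * t)|
        = |Real.sin (k * t) * Real.cos t + Real.cos (k * t) * Real.sin t| := by
          push_cast; rw [add_mul, one_mul, Real.sin_add]
      _ ≤ |Real.sin (k * t)| * |Real.cos t| + |Real.cos (k * t)| * |Real.sin t| := by
          rw [← abs_mul, ← abs_mul]; exact abs_add_le _ _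
      _ ≤ k * |Real.sin t| * 1 + 1 * |Real.sin t| := by
          gcongr <;> exact Real.abs_cos_le_one _
      _ = (k + 1 : ℕ) * |Real.sin t| := by push_cast; ring

lemma fejer_nonneg (n : ℕ) (y : ℝ) : 0 ≤ fejer n y := by
  unfold fejer; split_ifs <;> positivity

lemma fejer_le (n : ℕ) (y : ℝ) : fejer n y ≤ n := by
  unfold fejer; split_ifs
  · exact le_rfl
  have hquot : |Real.sin (n * π * y) / Real.sin (π * y)| ≤ n := by
    rw [abs_div, mul_assoc]
    exact div_le_of_le_mul₀ (abs_nonneg _) n.cast_nonneg (abs_sin_nat_mul_le n _)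
  calc 1 / (n : ℝ) * (Real.sin (n * π * y) / Real.sin (π * y)) ^ 2
      ≤ 1 / n * (n : ℝ) ^ 2 :=
        mul_le_mul_of_nonneg_left (sq_le_sq.2 (by rwa [Nat.abs_cast])) (by positivity)
    _ = (n : ℝ) := by
        rcases n.eq_zero_or_pos with rfl | hn
        · simp
        · field_simp

lemma measurable_fejer (n : ℕ) : Measurable (fejer n) := by
  have hint : MeasurableSet {y : ℝ | ∃ m : ℤ, y = m} := by
    simpa only [Set.range, eq_comm] using (Set.countable_range ((↑) : ℤ → ℝ)).measurableSet
  unfold fejer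
  exact Measurable.ite hint measurable_const (by fun_prop)

lemma integrable_fejer_sub (μ : Measure ℝ) [IsFiniteMeasure μ] (n : ℕ) (l : ℝ) :
    Integrable (fun x => fejer n (l - x)) μ :=
  (integrable_const (n : ℝ)).mono'
    ((measurable_fejer n).comp (measurable_const.sub measurable_id)).aestronglyMeasurable
    (Eventually.of_forall fun x => by
      rw [Real.norm_eq_abs, abs_of_nonneg (fejer_nonneg _ _)]; exact fejer_le _ _)

lemma four_mul_div_pi_sq_le_fejer {n : ℕ} (hn : 0 < n) {y : ℝ} (hy : |y| ≤ 1 / (2 * n)) :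
    4 * n / π ^ 2 ≤ fejer n y := by
  have hn' : (0 : ℝ) < n := Nat.cast_pos.2 hn
  have hπ := Real.pi_pos
  unfold fejer; split_ifs with hy_int
  · have : 4 ≤ π ^ 2 := by nlinarith [Real.pi_gt_three]
    rw [div_le_iff₀ (by positivity)]
    nlinarith
  have hy0 : 0 < |y| := abs_pos.2 fun h => hy_int ⟨0, by simpa using h⟩
  have hjordan : ∀ k : ℕ, 0 < k → k ≤ n → 2 * k * |y| ≤ |Real.sin (k * π * y)| := by
    intro k hk hkn
    have hk' : (k : ℝ) ≤ n := Nat.cast_le.2 hkn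
    have harg : |k * π * y| ≤ π / 2 := by
      rw [abs_mul, abs_mul, Nat.abs_cast, abs_of_pos hπ]
      calc k * π * |y| ≤ n * π * (1 / (2 * n)) := by gcongr
        _ = π / 2 := by field_simp
    have := Real.mul_abs_le_abs_sin harg
    rwa [abs_mul, abs_mul, Nat.abs_cast, abs_of_pos hπ,
      show 2 / π * (k * π * |y|) = 2 * k * |y| by field_simp] at this
  have hden_pos : 0 < |Real.sin (π * y)| := by
    have := hjordan 1 one_pos hn
    simp only [Nat.cast_one, one_mul] at this
    linarith
  have hden_le : |Real.sin (π * y)| ≤ π * |y| := by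
    simpa [abs_mul, abs_of_pos hπ] using Real.abs_sin_le_abs (x := π * y)
  have hquot : 2 * n / π ≤ |Real.sin (n * π * y) / Real.sin (π * y)| := by
    rw [abs_div, le_div_iff₀ hden_pos]
    calc 2 * n / π * |Real.sin (π * y)| ≤ 2 * n / π * (π * |y|) := by gcongr
      _ = 2 * n * |y| := by field_simp
      _ ≤ _ := hjordan n hn le_rfl
  calc 4 * (n : ℝ) / π ^ 2 = 1 / n * (2 * n / π) ^ 2 := by field_simp; ring
    _ ≤ 1 / n * (Real.sin (n * π * y) / Real.sin (π * y)) ^ 2 := by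
        refine mul_le_mul_of_nonneg_left (sq_le_sq.2 ?_) (by positivity)
        rwa [abs_of_pos (by positivity : (0 : ℝ) < 2 * n / π)]

lemma mul_measureReal_Icc_le_integral_fejer (μ : Measure ℝ) [IsFiniteMeasure μ] {n : ℕ}
    (hn : 0 < n) {c d : ℝ} (hcd : d - c ≤ 1 / n) :
    4 * n / π ^ 2 * μ.real (Icc c d) ≤ ∫ x, fejer n ((c + d) / 2 - x) ∂μ := by
  have hlower : ∀ x ∈ Icc c d, 4 * n / π ^ 2 ≤ fejer n ((c + d) / 2 - x) := by
    intro x hx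
    apply four_mul_div_pi_sq_le_fejer hn
    rw [abs_le, show (1 : ℝ) / (2 * n) = 1 / n / 2 by ring]
    constructor <;> linarith [hx.1, hx.2]
  calc 4 * n / π ^ 2 * μ.real (Icc c d)
      ≤ ∫ x in Icc c d, fejer n ((c + d) / 2 - x) ∂μ :=
        setIntegral_ge_of_const_le_real measurableSet_Icc (measure_ne_top μ _) hlower
          (integrable_fejer_sub μ n _).integrableOn
    _ ≤ ∫ x, fejer n ((c + d) / 2 - x) ∂μ :=
        setIntegral_le_integral (integrable_fejer_sub μ n _)
          (Eventually.of_forall fun x => fejer_nonneg n _)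

lemma measureReal_Icc_le_of_rpow_neg_mul_integral_fejer_le (μ : Measure ℝ) [IsFiniteMeasure μ]
    {n : ℕ} (hn : 0 < n) {c d β A : ℝ} (hcd : d - c ≤ 1 / n)
    (hG : (n : ℝ) ^ (-β) * ∫ x, fejer n ((c + d) / 2 - x) ∂μ ≤ A) :
    μ.real (Icc c d) ≤ π ^ 2 * A / 4 * (n : ℝ) ^ (β - 1) := by
  have hn' : (0 : ℝ) < n := Nat.cast_pos.2 hn
  have hp : 0 < (n : ℝ) ^ β := Real.rpow_pos_of_pos hn' β
  rw [Real.rpow_neg hn'.le] at hG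
  rw [Real.rpow_sub hn', Real.rpow_one]
  calc μ.real (Icc c d)
      = π ^ 2 / 4 * (n : ℝ) ^ β / n * (((n : ℝ) ^ β)⁻¹ * (4 * n / π ^ 2 * μ.real (Icc c d))) := by
        field_simp
    _ ≤ π ^ 2 / 4 * (n : ℝ) ^ β / n * A := by
        gcongr
        exact (mul_le_mul_of_nonneg_left
          (mul_measureReal_Icc_le_integral_fejer μ hn hcd) (by positivity)).trans hG
    _ = π ^ 2 * A / 4 * ((n : ℝ) ^ β / n) := by ring

lemma le_mul_rpow_of_forall_le_rpow_sub_one {m M K β ℓ : ℝ} {N : ℕ} (hN : 0 < N) (hβ : β < 1)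
    (hℓ : 0 ≤ ℓ) (hK : 0 ≤ K) (hm0 : 0 ≤ m) (hmM : m ≤ M)
    (hm : ∀ n : ℕ, N ≤ n → ℓ ≤ 1 / n → m ≤ K * (n : ℝ) ^ (β - 1)) :
    m ≤ (K * 2 ^ (1 - β) + M * (N : ℝ) ^ (1 - β)) * ℓ ^ (1 - β) := by
  have hN' : (0 : ℝ) < N := Nat.cast_pos.2 hN
  have hM : 0 ≤ M := hm0.trans hmM
  rcases hℓ.eq_or_lt with rfl | hℓ
  · have hlim : Tendsto (fun n : ℕ => K * (n : ℝ) ^ (β - 1)) atTop (𝓝 0) := by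
      simpa [neg_sub] using ((tendsto_rpow_neg_atTop (by linarith : 0 < 1 - β)).comp
        tendsto_natCast_atTop_atTop).const_mul K
    have : m ≤ 0 := ge_of_tendsto hlim <|
      (eventually_ge_atTop N).mono fun n hn => hm n hn (by positivity)
    rwa [Real.zero_rpow (by linarith), mul_zero]
  rcases le_or_gt (1 / (N : ℝ)) ℓ with hlong | hshort
  · calc m ≤ M * (N : ℝ) ^ (1 - β) * (1 / N) ^ (1 - β) := by
          rw [mul_assoc, ← Real.mul_rpow hN'.le (by positivity), mul_one_div_cancel hN'.ne',
            Real.one_rpow, mul_one]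
          exact hmM
      _ ≤ M * (N : ℝ) ^ (1 - β) * ℓ ^ (1 - β) := by gcongr
      _ ≤ _ := by gcongr; exact le_add_of_nonneg_left (by positivity)
  set n := ⌊1 / ℓ⌋₊
  have hNℓ : (N : ℝ) < 1 / ℓ := by rwa [lt_one_div hN' hℓ]
  have hNn : N ≤ n := Nat.le_floor hNℓ.le
  have hn : (0 : ℝ) < n := Nat.cast_pos.2 (hN.trans_le hNn)
  have hn1 : (1 : ℝ) ≤ n := by exact_mod_cast hN.trans_le hNn
  have hℓn : ℓ ≤ 1 / n := by rw [le_one_div hℓ hn]; exact Nat.floor_le (by positivity)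
  have hinv : (n : ℝ)⁻¹ ≤ 2 * ℓ := by
    have := Nat.lt_floor_add_one (1 / ℓ)
    rw [inv_le_iff_one_le_mul₀ hn]
    rw [div_lt_iff₀ hℓ] at this
    nlinarith
  calc m ≤ K * (n : ℝ) ^ (β - 1) := hm n hNn hℓn
    _ = K * ((n : ℝ)⁻¹) ^ (1 - β) := by
        rw [Real.inv_rpow hn.le, ← Real.rpow_neg hn.le, neg_sub]
    _ ≤ K * (2 * ℓ) ^ (1 - β) := by gcongr
    _ = K * 2 ^ (1 - β) * ℓ ^ (1 - β) := by rw [Real.mul_rpow (by norm_num) hℓ.le, mul_assoc]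
    _ ≤ _ := by gcongr; exact le_add_of_nonneg_right (by positivity)

theorem stmt3_general (μ : Measure ℝ) [IsFiniteMeasure μ]
    (a b : ℝ) (β : ℝ) (hβ1 : β ≤ 1)
    (h : ∃ C : ℝ, 0 < C ∧ ∀ ε > 0, ∃ N : ℕ, ∀ n ≥ N, ∀ l ∈ Set.Ioo a b,
      (n : ℝ) ^ (-β) * ∫ x, fejer n (l - x) ∂μ ≤ C + ε) :
    ∃ C' : ℝ, ∀ c d : ℝ, c ≤ d → Set.Icc c d ⊆ Set.Ioo a b → d - c < 1 →
      (μ (Set.Icc c d)).toReal ≤ C' * (d - c) ^ ((1:ℝ) - β) := by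
  obtain ⟨C, hC, hG⟩ := h
  obtain ⟨N, hN⟩ := hG 1 one_pos
  rcases hβ1.lt_or_eq with hβ | rfl
  · refine ⟨π ^ 2 * (C + 1) / 4 * 2 ^ (1 - β) + μ.real univ * (N + 1 : ℕ) ^ (1 - β),
      fun c d hcd hsub _ => ?_⟩
    have hmid : (c + d) / 2 ∈ Ioo a b := hsub ⟨by linarith, by linarith⟩
    refine le_mul_rpow_of_forall_le_rpow_sub_one N.succ_pos hβ (sub_nonneg.2 hcd)
      (by positivity) measureReal_nonneg (measureReal_mono (subset_univ _)) fun n hn hℓ => ?_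
    exact measureReal_Icc_le_of_rpow_neg_mul_integral_fejer_le μ (N.succ_pos.trans_le hn) hℓ
      (hN n (N.le_succ.trans hn) _ hmid)
  · exact ⟨μ.real univ, fun c d _ _ _ => by
      rw [sub_self, Real.rpow_zero, mul_one]; exact measureReal_mono (subset_univ _)⟩

/-- If `n^{-β} G_n(λ)` is bounded above by `C` (in the limsup sense) uniformly in
`λ ∈ Δ = (a,b)`, then `μ` is uniformly `(1-β)`-Hölder continuous in `Δ`.
The measure `μ` on the circle `𝕋 = ℝ/ℤ` is represented as a finite measure on `ℝ`
supported on `[0,1)`. -/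
theorem stmt3 (μ : Measure ℝ) [IsFiniteMeasure μ]
    (hsupp : μ (Set.Ico (0:ℝ) 1)ᶜ = 0)
    (a b : ℝ) (ha : 0 ≤ a) (hb : b ≤ 1) (β : ℝ) (hβ0 : 0 ≤ β) (hβ1 : β ≤ 1)
    (h : ∃ C : ℝ, 0 < C ∧ ∀ ε > 0, ∃ N : ℕ, ∀ n ≥ N, ∀ l ∈ Set.Ioo a b,
      (n : ℝ) ^ (-β) * ∫ x, fejer n (l - x) ∂μ ≤ C + ε) :
    ∃ C' : ℝ, ∀ c d : ℝ, c ≤ d → Set.Icc c d ⊆ Set.Ioo a b → d - c < 1 →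
      (μ (Set.Icc c d)).toReal ≤ C' * (d - c) ^ ((1:ℝ) - β) :=
  stmt3_general μ a b β hβ1 h
end

section
/- Let μ be a finite positive Borel measure on ℝ and G_T(λ) := ∫ K_T(λ-x) dμ(x) with K_T(y) = (1/T)(sin(πTy)/(πy))². If μ is uniformly (1-β)-Hölder continuous in an open interval Δ (0 ≤ β ≤ 1), then for each λ ∈ Δ, limsup_{T→∞} T^{-β} G_T(λ) < ∞. -/
open MeasureTheory Filter
open scoped Real

/-- The Fejér kernel on `ℝ`: `K_T(y) = (1/T)(sin(πTy)/(πy))²`, with value `T`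
at `y = 0` (the continuous extension). -/
noncomputable def fejerR (T y : ℝ) : ℝ :=
  if y = 0 then T else (1 / T) * (Real.sin (π * T * y) / (π * y)) ^ 2

/-!
Since `K_T(y) ≤ min (T, 1 / (T y²))`, splitting `ℝ` into the dyadic shells
`2ⁿ⁻¹/T ≤ |λ - x| < 2ⁿ/T` bounds `G_T(λ)` by `∑ₙ 4T 4⁻ⁿ μ(B(λ, 2ⁿ/T))`. Hölder continuity near `λ`
together with finiteness of `μ` gives `μ(B(λ, r)) ≤ A r^(1-β)` for all `r > 0`, and the sum is then
a geometric series of size `O(T^β)`; the remaining tail `T 4⁻ᴺ μ(ℝ)` vanishes as `N → ∞`.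
-/

open Metric Finset

lemma fejerR_nonneg {T : ℝ} (hT : 0 < T) (y : ℝ) : 0 ≤ fejerR T y := by
  unfold fejerR
  split_ifs
  · exact hT.le
  · positivity

lemma fejerR_le_self {T : ℝ} (hT : 0 < T) (y : ℝ) : fejerR T y ≤ T := by
  unfold fejerR
  split_ifs with hy
  · exact le_rfl
  · calc 1 / T * (Real.sin (π * T * y) / (π * y)) ^ 2
        ≤ 1 / T * ((π * T * y) / (π * y)) ^ 2 := by
          rw [div_pow, div_pow]; gcongr 1 / T * (?_ / _); exact Real.sin_sq_le_sq
      _ = T := by field_simp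

lemma fejerR_le_one_div_mul_sq {T r y : ℝ} (hT : 0 < T) (hr : 0 < r) (hy : r ≤ |y|) :
    fejerR T y ≤ 1 / (T * r ^ 2) := by
  have hy0 : y ≠ 0 := abs_pos.mp (hr.trans_le hy)
  have hπ : 1 ≤ π ^ 2 := one_le_pow₀ (by linarith [Real.pi_gt_three])
  have hry : r ^ 2 ≤ y ^ 2 := by rw [← sq_abs y]; gcongr
  rw [fejerR, if_neg hy0, div_pow, mul_pow]
  calc 1 / T * (Real.sin (π * T * y) ^ 2 / (π ^ 2 * y ^ 2))
      ≤ 1 / T * (1 / (1 * r ^ 2)) := by gcongr; exact Real.sin_sq_le_one _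
    _ = 1 / (T * r ^ 2) := by field_simp

lemma fejerR_le_div_four_pow {T y : ℝ} (hT : 0 < T) (n : ℕ) (hy : 2 ^ n / T ≤ |y|) :
    fejerR T y ≤ T / 4 ^ n := by
  calc fejerR T y ≤ 1 / (T * (2 ^ n / T) ^ 2) := fejerR_le_one_div_mul_sq hT (by positivity) hy
    _ = T / 4 ^ n := by
        rw [show (4 : ℝ) ^ n = (2 ^ n) ^ 2 by rw [← pow_mul', pow_mul]; norm_num]
        field_simp

section Dyadic

variable {T : ℝ} (l : ℝ)

noncomputable def fejerDyadicSum (T : ℝ) (N : ℕ) (x : ℝ) : ℝ :=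
  ∑ n ∈ range (N + 1), (ball l (2 ^ n / T)).indicator (fun _ => 4 * T / 4 ^ n) x

lemma fejerDyadicSum_nonneg (hT : 0 < T) (N : ℕ) (x : ℝ) : 0 ≤ fejerDyadicSum l T N x :=
  sum_nonneg fun _ _ => Set.indicator_nonneg (fun _ _ => by positivity) x

lemma fejerR_le_fejerDyadicSum_of_dist_lt (hT : 0 < T) {x : ℝ} :
    ∀ N : ℕ, dist x l < 2 ^ N / T → fejerR T (l - x) ≤ fejerDyadicSum l T N x
  | 0, hx => by
    simp only [fejerDyadicSum, zero_add, range_one, sum_singleton, pow_zero, div_one]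
    rw [Set.indicator_of_mem (by simpa using hx)]
    linarith [fejerR_le_self hT (l - x)]
  | N + 1, hx => by
    rw [fejerDyadicSum, sum_range_succ, ← fejerDyadicSum]
    by_cases hN : dist x l < 2 ^ N / T
    · have := fejerR_le_fejerDyadicSum_of_dist_lt hT N hN
      linarith [Set.indicator_nonneg (fun _ _ => by positivity : ∀ y ∈ ball l (2 ^ (N + 1) / T),
        (0 : ℝ) ≤ 4 * T / 4 ^ (N + 1)) x]
    · rw [Set.indicator_of_mem (mem_ball.mpr hx)]
      have hshell : 2 ^ N / T ≤ |l - x| := by rw [abs_sub_comm, ← Real.dist_eq]; linarith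
      have hK := fejerR_le_div_four_pow hT N hshell
      have : T / 4 ^ N = 4 * T / 4 ^ (N + 1) := by rw [pow_succ]; field_simp
      linarith [fejerDyadicSum_nonneg l hT N x]

lemma fejerR_le_fejerDyadicSum_add (hT : 0 < T) (N : ℕ) (x : ℝ) :
    fejerR T (l - x) ≤ fejerDyadicSum l T N x + T / 4 ^ N := by
  by_cases hx : dist x l < 2 ^ N / T
  · linarith [fejerR_le_fejerDyadicSum_of_dist_lt l hT N hx, show 0 ≤ T / 4 ^ N by positivity]
  · have hfar : 2 ^ N / T ≤ |l - x| := by rw [abs_sub_comm, ← Real.dist_eq]; linarith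
    linarith [fejerR_le_div_four_pow hT N hfar, fejerDyadicSum_nonneg l hT N x]

variable (μ : Measure ℝ) [IsFiniteMeasure μ]

lemma integrable_fejerDyadicSum (N : ℕ) : Integrable (fejerDyadicSum l T N) μ :=
  integrable_finsetSum _ fun _ _ => (integrable_const _).indicator measurableSet_ball

lemma integral_fejerDyadicSum (N : ℕ) :
    ∫ x, fejerDyadicSum l T N x ∂μ =
      ∑ n ∈ range (N + 1), μ.real (ball l (2 ^ n / T)) * (4 * T / 4 ^ n) := by
  simp only [fejerDyadicSum]
  rw [integral_finsetSum _ fun n _ => (integrable_const _).indicator measurableSet_ball]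
  simp only [integral_indicator_const _ measurableSet_ball, smul_eq_mul]

lemma integral_fejerR_le (hT : 0 < T) (N : ℕ) :
    ∫ x, fejerR T (l - x) ∂μ ≤
      ∑ n ∈ range (N + 1), μ.real (ball l (2 ^ n / T)) * (4 * T / 4 ^ n) +
        μ.real Set.univ * (T / 4 ^ N) := by
  calc ∫ x, fejerR T (l - x) ∂μ ≤ ∫ x, (fejerDyadicSum l T N x + T / 4 ^ N) ∂μ :=
        integral_mono_of_nonneg (.of_forall fun x => fejerR_nonneg hT _)
          ((integrable_fejerDyadicSum l μ N).add (integrable_const _))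
          (.of_forall (fejerR_le_fejerDyadicSum_add l hT N))
    _ = _ := by
        rw [integral_add (integrable_fejerDyadicSum l μ N) (integrable_const _),
          integral_fejerDyadicSum, integral_const, smul_eq_mul]

end Dyadic

lemma measureReal_ball_mul_le_geometric {μ : Measure ℝ} {l A s T : ℝ} (hs : s ≤ 1) (hT : 0 < T)
    (hA0 : 0 ≤ A) (hA : ∀ r, 0 < r → μ.real (ball l r) ≤ A * r ^ s) (n : ℕ) :
    μ.real (ball l (2 ^ n / T)) * (4 * T / 4 ^ n) ≤ 4 * A * T ^ (1 - s) * (1 / 2) ^ n := by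
  have h2n : ((2 : ℝ) ^ n) ^ s ≤ 2 ^ n := by
    simpa using Real.rpow_le_rpow_of_exponent_le (one_le_pow₀ one_le_two) hs
  have hTs : T * (T ^ s)⁻¹ = T ^ (1 - s) := by
    rw [Real.rpow_sub hT, Real.rpow_one, div_eq_mul_inv]
  calc μ.real (ball l (2 ^ n / T)) * (4 * T / 4 ^ n)
      ≤ A * (2 ^ n / T) ^ s * (4 * T / 4 ^ n) := by gcongr; exact hA _ (by positivity)
    _ = 4 * A * (T * (T ^ s)⁻¹) * (((2 : ℝ) ^ n) ^ s / 4 ^ n) := by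
        rw [Real.div_rpow (by positivity) hT.le]; ring
    _ ≤ 4 * A * (T * (T ^ s)⁻¹) * (2 ^ n / 4 ^ n) := by gcongr
    _ = 4 * A * T ^ (1 - s) * (1 / 2) ^ n := by
        rw [hTs, show (4 : ℝ) ^ n = 2 ^ n * 2 ^ n by rw [← mul_pow]; norm_num, one_div, inv_pow]
        field_simp

lemma integral_fejerR_le_of_measure_ball_le {μ : Measure ℝ} [IsFiniteMeasure μ] {l A s T : ℝ}
    (hs : s ≤ 1) (hT : 0 < T) (hA : ∀ r, 0 < r → μ.real (ball l r) ≤ A * r ^ s) :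
    ∫ x, fejerR T (l - x) ∂μ ≤ 8 * A * T ^ (1 - s) := by
  have hA0 : 0 ≤ A := by simpa using measureReal_nonneg.trans (hA 1 one_pos)
  have hsum : ∀ N : ℕ, ∑ n ∈ range (N + 1), μ.real (ball l (2 ^ n / T)) * (4 * T / 4 ^ n) ≤
      8 * A * T ^ (1 - s) := fun N => by
    calc _ ≤ ∑ n ∈ range (N + 1), 4 * A * T ^ (1 - s) * (1 / 2) ^ n :=
          sum_le_sum fun n _ => measureReal_ball_mul_le_geometric hs hT hA0 hA n
      _ = 4 * A * T ^ (1 - s) * ∑ n ∈ range (N + 1), (1 / 2 : ℝ) ^ n := by rw [mul_sum]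
      _ ≤ 4 * A * T ^ (1 - s) * 2 := by gcongr; exact sum_geometric_two_le _
      _ = 8 * A * T ^ (1 - s) := by ring
  have htail : Tendsto (fun N : ℕ => 8 * A * T ^ (1 - s) + μ.real Set.univ * (T / 4 ^ N)) atTop
      (nhds (8 * A * T ^ (1 - s))) := by
    have h4 : Tendsto (fun N : ℕ => ((1 : ℝ) / 4) ^ N) atTop (nhds 0) :=
      tendsto_pow_atTop_nhds_zero_of_lt_one (by norm_num) (by norm_num)
    simpa [div_eq_mul_inv, inv_pow, mul_assoc] using
      (h4.const_mul (μ.real Set.univ * T)).const_add _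
  exact ge_of_tendsto' htail fun N => (integral_fejerR_le l μ hT N).trans (by linarith [hsum N])

lemma exists_measure_ball_le_rpow {μ : Measure ℝ} [IsFiniteMeasure μ] {a b s C l : ℝ} (hs : 0 ≤ s)
    (hC : ∀ c d : ℝ, c ≤ d → Set.Icc c d ⊆ Set.Ioo a b → d - c < 1 →
      μ.real (Set.Icc c d) ≤ C * (d - c) ^ s)
    (hl : l ∈ Set.Ioo a b) : ∃ A, ∀ r, 0 < r → μ.real (ball l r) ≤ A * r ^ s := by
  obtain ⟨ε, hε, hεab⟩ := Metric.isOpen_iff.mp isOpen_Ioo l hl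
  set δ := min (ε / 2) (1 / 3)
  have hδ : 0 < δ := lt_min (by positivity) (by norm_num)
  refine ⟨max (C * 2 ^ s) (μ.real Set.univ / δ ^ s), fun r hr => ?_⟩
  rcases le_or_gt r δ with hrδ | hδr
  · have hsub : Set.Icc (l - r) (l + r) ⊆ Set.Ioo a b := by
      rw [← Real.closedBall_eq_Icc]
      exact (closedBall_subset_ball (by linarith [min_le_left (ε / 2) (1 / 3)])).trans hεab
    calc μ.real (ball l r) ≤ μ.real (Set.Icc (l - r) (l + r)) := by
          rw [← Real.closedBall_eq_Icc]; exact measureReal_mono ball_subset_closedBall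
      _ ≤ C * (l + r - (l - r)) ^ s :=
          hC _ _ (by linarith) hsub (by linarith [min_le_right (ε / 2) (1 / 3)])
      _ = C * 2 ^ s * r ^ s := by
          rw [show l + r - (l - r) = 2 * r by ring, Real.mul_rpow zero_le_two hr.le]; ring
      _ ≤ _ := by gcongr; exact le_max_left _ _
  · calc μ.real (ball l r) ≤ μ.real Set.univ := measureReal_mono (Set.subset_univ _)
      _ = μ.real Set.univ / δ ^ s * δ ^ s := by field_simp
      _ ≤ max (C * 2 ^ s) (μ.real Set.univ / δ ^ s) * r ^ s := by
          gcongr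
          exact le_max_right _ _

/-- If `μ` is uniformly `(1-β)`-Hölder continuous in the open interval `(a,b)`,
then for each `λ ∈ (a,b)`, `limsup_{T→∞} T^{-β} G_T(λ) < ∞`. -/
theorem stmt7 (μ : Measure ℝ) [IsFiniteMeasure μ]
    (a b β : ℝ) (hβ0 : 0 ≤ β) (hβ1 : β ≤ 1)
    (h : ∃ C : ℝ, ∀ c d : ℝ, c ≤ d → Set.Icc c d ⊆ Set.Ioo a b → d - c < 1 →
      (μ (Set.Icc c d)).toReal ≤ C * (d - c) ^ ((1:ℝ) - β)) :
    ∀ l ∈ Set.Ioo a b, ∃ C' : ℝ,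
      ∀ᶠ T in Filter.atTop, T ^ (-β) * ∫ x, fejerR T (l - x) ∂μ ≤ C' := by
  intro l hl
  obtain ⟨C, hC⟩ := h
  obtain ⟨A, hA⟩ := exists_measure_ball_le_rpow (sub_nonneg.mpr hβ1) hC hl
  refine ⟨8 * A, ?_⟩
  filter_upwards [eventually_gt_atTop 0] with T hT
  calc T ^ (-β) * ∫ x, fejerR T (l - x) ∂μ ≤ T ^ (-β) * (8 * A * T ^ (1 - (1 - β))) := by
        gcongr
        exact integral_fejerR_le_of_measure_ball_le (by linarith) hT hA
    _ = 8 * A := by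
        rw [sub_sub_cancel, Real.rpow_neg hT.le]
        field_simp [(Real.rpow_pos_of_pos hT β).ne']
end
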